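/- Theorem 3 (quadratic part): Let F, H : GL(n,ℝ) × gl(n,ℝ) → ℝ be smooth and S-invariant, and define f(L) = F(1_n, L), h(L) = H(1_n, L). Then for every L ∈ gl(n,ℝ), {F,H}_2(1_n, L) = {f,h}_2(L); that is, the quadratic Poisson bracket on the cotangent bundle reduces to the quadratic r-matrix bracket on gl(n,ℝ). -/

import Mathlib

open Matrix

noncomputable section

attribute [local instance] Matrix.frobeniusNormedAddCommGroup Matrix.frobeniusNormedSpace

/-- `gl n` is the space of real `n × n` matrices. -/
abbrev gl (n : ℕ) := Matrix (Fin n) (Fin n) ℝ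

variable {n : ℕ}

/-- The strictly upper triangular part `X_>`. -/
def upPart (X : gl n) : gl n := Matrix.of fun i j => if i < j then X i j else 0

/-- The diagonal part `X_0`. -/
def diagPart (X : gl n) : gl n := Matrix.of fun i j => if i = j then X i j else 0

/-- The strictly lower triangular part `X_<`. -/
def lowPart (X : gl n) : gl n := Matrix.of fun i j => if j < i then X i j else 0

/-- The trace form `⟨X,Y⟩ = tr(XY)`. -/
def trForm (X Y : gl n) : ℝ := (X * Y).trace

/-- `R(X) = ½(X_> + X_0 − X_<) + (X_<)ᵀ`. -/
def Rop (X : gl n) : gl n := (1/2 : ℝ) • (upPart X + diagPart X - lowPart X) + (lowPart X)ᵀ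

/-- `R_a(X) = ½(X_> − X_<)`, the anti-symmetric part of `R`. -/
def Ra (X : gl n) : gl n := (1/2 : ℝ) • (upPart X - lowPart X)

/-- `R_s(X) = ½X_0 + (X_<)ᵀ`, the symmetric part of `R`. -/
def Rs (X : gl n) : gl n := (1/2 : ℝ) • diagPart X + (lowPart X)ᵀ

/-- `r₊ = R_a + ½·id`. -/
def rPlus (X : gl n) : gl n := Ra X + (1/2 : ℝ) • X

/-- `r₋ = R_a − ½·id`. -/
def rMinus (X : gl n) : gl n := Ra X - (1/2 : ℝ) • X

/-- The skew-symmetric part `Z⁺ = ½(Z − Zᵀ)`. -/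
def skewPart (X : gl n) : gl n := (1/2 : ℝ) • (X - Xᵀ)

/-- The symmetric part `Z⁻ = ½(Z + Zᵀ)`. -/
def symPart (X : gl n) : gl n := (1/2 : ℝ) • (X + Xᵀ)

/-- `df` is the gradient of `f` with respect to the trace form:
`tr(df(L)·Y)` is the derivative of `f` at `L` in direction `Y`. -/
def IsGradient (f : gl n → ℝ) (df : gl n → gl n) : Prop :=
  ∀ L Y : gl n, HasDerivAt (fun t : ℝ => f (L + t • Y)) (trForm (df L) Y) 0

/-- `f : gl(n,ℝ) → ℝ` is smooth. -/
def SmoothG (f : gl n → ℝ) : Prop := ContDiff ℝ (⊤ : ℕ∞) f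

/-- The quadratic r-matrix bracket `{f,h}₂(L)`, expressed via the gradient
functions `df`, `dh` of `f` and `h`:
`⟨∇f, R_a∇h⟩ − ⟨∇'f, R_a∇'h⟩ + ⟨∇f, R_s∇'h⟩ − ⟨∇'f, R_s∇h⟩`
with `∇f = L·df(L)` and `∇'f = df(L)·L`. -/
def quadBr (df dh : gl n → gl n) (L : gl n) : ℝ :=
  trForm (L * df L) (Ra (L * dh L)) - trForm (df L * L) (Ra (dh L * L))
    + trForm (L * df L) (Rs (dh L * L)) - trForm (df L * L) (Rs (L * dh L))

/-- The linear r-matrix bracket `{f,h}₁(L) = ⟨L, [R df(L), dh(L)] + [df(L), R dh(L)]⟩`. -/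
def linBr (df dh : gl n → gl n) (L : gl n) : ℝ :=
  trForm L (⁅Rop (df L), dh L⁆ + ⁅df L, Rop (dh L)⁆)

/-- The Toda Hamiltonians `h_k(L) = (1/k)·tr(L^k)`. -/
def hamH (k : ℕ) (L : gl n) : ℝ := (1 / (k : ℝ)) * (L ^ k).trace

/-- `a` is an orthogonal matrix. -/
def IsOrth (a : gl n) : Prop := aᵀ * a = 1

/-- `b` belongs to `B`: upper triangular with strictly positive diagonal entries. -/
def InB (b : gl n) : Prop := b.BlockTriangular id ∧ ∀ i, 0 < b i i

/-- `F : 𝔐 → ℝ` is invariant under the action `(g,L) ↦ (a g b⁻¹, a L a⁻¹)`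
of `S = O(n,ℝ) × B` on `𝔐 = GL(n,ℝ) × gl(n,ℝ)`. -/
def SInvariant (F : gl n × gl n → ℝ) : Prop :=
  ∀ a b g L : gl n, IsOrth a → InB b → IsUnit g.det →
    F (a * g * b⁻¹, a * L * a⁻¹) = F (g, L)

/-- `F` is smooth on `𝔐 = GL(n,ℝ) × gl(n,ℝ)`. -/
def SmoothOnM (F : gl n × gl n → ℝ) : Prop :=
  ContDiffOn ℝ (⊤ : ℕ∞) F {p : gl n × gl n | IsUnit p.1.det}

/-- `N` is the left derivative `∇₁F`:
`⟨∇₁F(g,L), X⟩ = d/dt|₀ F(e^{tX} g, L)` for all `X`. -/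
def IsGrad1 (F : gl n × gl n → ℝ) (N : gl n × gl n → gl n) : Prop :=
  ∀ g L : gl n, IsUnit g.det → ∀ X : gl n,
    HasDerivAt (fun t : ℝ => F (NormedSpace.exp (t • X) * g, L)) (trForm (N (g, L)) X) 0

/-- `N` is the right derivative `∇₁'F`:
`⟨∇₁'F(g,L), X⟩ = d/dt|₀ F(g e^{tX}, L)` for all `X`. -/
def IsGrad1' (F : gl n × gl n → ℝ) (N : gl n × gl n → gl n) : Prop :=
  ∀ g L : gl n, IsUnit g.det → ∀ X : gl n,
    HasDerivAt (fun t : ℝ => F (g * NormedSpace.exp (t • X), L)) (trForm (N (g, L)) X) 0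

/-- `D` is the gradient `d₂F` of `F` in the second argument. -/
def IsGrad2 (F : gl n × gl n → ℝ) (D : gl n × gl n → gl n) : Prop :=
  ∀ g L : gl n, IsUnit g.det → ∀ Y : gl n,
    HasDerivAt (fun t : ℝ => F (g, L + t • Y)) (trForm (D (g, L)) Y) 0

/-- The quadratic bracket `{F,H}₂(g,L)` on `𝔐`, expressed through the derivative data
`nf = ∇₁F(g,L)`, `nf' = ∇₁'F(g,L)`, `d2f = d₂F(g,L)` and likewise for `H`:
`⟨R_a∇₁F, ∇₁H⟩ − ⟨R_a∇₁'F, ∇₁'H⟩ + ⟨∇₂F − ∇₂'F, r₊∇₂'H − r₋∇₂H⟩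
 + ⟨∇₁F, r₊∇₂'H − r₋∇₂H⟩ − ⟨∇₁H, r₊∇₂'F − r₋∇₂F⟩`. -/
def pb2 (nf nf' d2f nh nh' d2h L : gl n) : ℝ :=
  trForm (Ra nf) nh - trForm (Ra nf') nh'
    + trForm (L * d2f - d2f * L) (rPlus (d2h * L) - rMinus (L * d2h))
    + trForm nf (rPlus (d2h * L) - rMinus (L * d2h))
    - trForm nh (rPlus (d2f * L) - rMinus (L * d2f))

/-- The canonical bracket `{F,H}₁(g,L)` on `𝔐`, expressed through the derivative data:
`⟨∇₁F, d₂H⟩ − ⟨∇₁H, d₂F⟩ + ⟨L, [d₂F, d₂H]⟩`. -/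
def pb1 (nf d2f nh d2h L : gl n) : ℝ :=
  trForm nf d2h - trForm nh d2f + trForm L ⁅d2f, d2h⁆


/-! ### Auxiliary lemmas -/

attribute [local instance] Matrix.frobeniusNormedRing Matrix.frobeniusNormedAlgebra

section TrFormLemmas

lemma trForm_apply (X Y : gl n) : trForm X Y = ∑ i, ∑ j, X i j * Y j i := by
  simp [trForm, Matrix.trace, Matrix.mul_apply, Matrix.diag]

lemma trForm_comm (X Y : gl n) : trForm X Y = trForm Y X := Matrix.trace_mul_comm X Y

lemma trForm_add_left (X Y Z : gl n) : trForm (X + Y) Z = trForm X Z + trForm Y Z := by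
  simp [trForm, Matrix.add_mul]

lemma trForm_sub_left (X Y Z : gl n) : trForm (X - Y) Z = trForm X Z - trForm Y Z := by
  simp [trForm, Matrix.sub_mul]

lemma trForm_add_right (X Y Z : gl n) : trForm X (Y + Z) = trForm X Y + trForm X Z := by
  simp [trForm, Matrix.mul_add]

lemma trForm_sub_right (X Y Z : gl n) : trForm X (Y - Z) = trForm X Y - trForm X Z := by
  simp [trForm, Matrix.mul_sub]

lemma trForm_smul_right (c : ℝ) (X Y : gl n) : trForm X (c • Y) = c * trForm X Y := by
  simp [trForm, Matrix.mul_smul]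

lemma trForm_smul_left (c : ℝ) (X Y : gl n) : trForm (c • X) Y = c * trForm X Y := by
  simp [trForm, Matrix.smul_mul]

lemma trForm_stdBasis (A : gl n) (i j : Fin n) :
    trForm A (Matrix.single j i 1) = A i j := by
  rw [trForm_apply]
  rw [Finset.sum_eq_single i]
  · rw [Finset.sum_eq_single j]
    · simp [Matrix.single]
    · intro q _ hq
      simp [Matrix.single, Ne.symm hq]
    · simp
  · intro p _ hp
    apply Finset.sum_eq_zero
    intro q _
    simp [Matrix.single, Ne.symm hp]
  · simp

lemma trForm_ext {A B : gl n} (h : ∀ Y, trForm A Y = trForm B Y) : A = B := by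
  ext i j
  have := h (Matrix.single j i 1)
  rwa [trForm_stdBasis, trForm_stdBasis] at this

lemma trForm_upPart (X Y : gl n) : trForm (upPart X) Y = trForm X (lowPart Y) := by
  rw [trForm_apply, trForm_apply]
  refine Finset.sum_congr rfl fun i _ => Finset.sum_congr rfl fun j _ => ?_
  by_cases h : i < j <;> simp [upPart, lowPart, h]

lemma trForm_lowPart (X Y : gl n) : trForm (lowPart X) Y = trForm X (upPart Y) := by
  rw [trForm_apply, trForm_apply]
  refine Finset.sum_congr rfl fun i _ => Finset.sum_congr rfl fun j _ => ?_
  by_cases h : j < i <;> simp [upPart, lowPart, h]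

lemma trForm_diagPart (X Y : gl n) : trForm (diagPart X) Y = trForm X (diagPart Y) := by
  rw [trForm_apply, trForm_apply]
  refine Finset.sum_congr rfl fun i _ => Finset.sum_congr rfl fun j _ => ?_
  by_cases h : i = j
  · subst h; simp [diagPart]
  · simp [diagPart, h, Ne.symm h]

lemma trForm_lowT (X Y : gl n) : trForm (lowPart X)ᵀ Y = trForm (lowPart Y)ᵀ X := by
  rw [trForm_apply, trForm_apply]
  refine Finset.sum_congr rfl fun i _ => Finset.sum_congr rfl fun j _ => ?_
  by_cases h : i < j <;> simp [lowPart, h] <;> ring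

lemma trForm_Ra (X Y : gl n) : trForm X (Ra Y) = -trForm (Ra X) Y := by
  have h1 : trForm (Ra X) Y = (1/2 : ℝ) * (trForm X (lowPart Y) - trForm X (upPart Y)) := by
    rw [Ra, trForm_smul_left, trForm_sub_left, trForm_upPart, trForm_lowPart]
  have h2 : trForm X (Ra Y) = (1/2 : ℝ) * (trForm X (upPart Y) - trForm X (lowPart Y)) := by
    rw [Ra, trForm_smul_right, trForm_sub_right]
  rw [h1, h2]; ring

lemma trForm_Rs (X Y : gl n) : trForm X (Rs Y) = trForm (Rs X) Y := by
  have h1 : trForm (Rs X) Y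
      = (1/2 : ℝ) * trForm (diagPart Y) X + trForm (lowPart Y)ᵀ X := by
    rw [Rs, trForm_add_left, trForm_smul_left, trForm_diagPart, trForm_lowT,
      trForm_comm X (diagPart Y)]
  have h2 : trForm X (Rs Y)
      = (1/2 : ℝ) * trForm (diagPart Y) X + trForm (lowPart Y)ᵀ X := by
    rw [trForm_comm, Rs, trForm_add_left, trForm_smul_left]
  rw [h1, h2]

end TrFormLemmas

section StrictUpper

lemma trForm_su_low {N : gl n} (hN : ∀ i j : Fin n, j ≤ i → N i j = 0) (A : gl n) :
    trForm N (lowPart A) = trForm N A := by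
  rw [trForm_apply, trForm_apply]
  refine Finset.sum_congr rfl fun i _ => Finset.sum_congr rfl fun j _ => ?_
  by_cases h : i < j
  · simp [lowPart, h]
  · simp [lowPart, h, hN i j (not_lt.1 h)]

lemma trForm_su_lowT {N : gl n} (hN : ∀ i j : Fin n, j ≤ i → N i j = 0) (A : gl n) :
    trForm N (lowPart A)ᵀ = 0 := by
  rw [trForm_apply]
  refine Finset.sum_eq_zero fun i _ => Finset.sum_eq_zero fun j _ => ?_
  by_cases h : j < i
  · simp [hN i j h.le]
  · simp [lowPart, h]

lemma pairN {N K : gl n} (hN : ∀ i j : Fin n, j ≤ i → N i j = 0)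
    (hs : ∀ X : gl n, Xᵀ = -X → trForm (N + K) X = 0) (A : gl n) :
    trForm N A = trForm K ((lowPart A)ᵀ - lowPart A) := by
  have hX : (lowPart A - (lowPart A)ᵀ)ᵀ = -(lowPart A - (lowPart A)ᵀ) := by
    rw [Matrix.transpose_sub, Matrix.transpose_transpose, neg_sub]
  have h0 := hs _ hX
  rw [trForm_add_left, trForm_sub_right, trForm_sub_right,
    trForm_su_low hN, trForm_su_lowT hN] at h0
  rw [trForm_sub_right]
  linarith

lemma lowT_sub (A : gl n) :
    (lowPart A)ᵀ - lowPart A = Ra A + Rs A - (1/2 : ℝ) • A := by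
  ext i j
  simp only [Ra, Rs, upPart, lowPart, diagPart, Matrix.sub_apply, Matrix.add_apply,
    Matrix.smul_apply, Matrix.transpose_apply, Matrix.of_apply, smul_eq_mul]
  rcases lt_trichotomy i j with h | h | h
  · simp only [if_pos h, if_neg (asymm h), if_neg h.ne]; ring
  · subst h
    simp only [lt_irrefl, ite_false, eq_self_iff_true, if_true, if_false]
    ring
  · simp only [if_pos h, if_neg (asymm h), if_neg (fun hh : i = j => h.ne' hh)]; ring

lemma lowPart_rp (X Y : gl n) : lowPart (rPlus X - rMinus Y) = lowPart Y := by
  ext i j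
  by_cases h : j < i
  · simp only [rPlus, rMinus, Ra, upPart, lowPart, Matrix.sub_apply, Matrix.add_apply,
      Matrix.smul_apply, Matrix.of_apply, smul_eq_mul, if_pos h, if_neg (asymm h)]
    ring
  · simp [lowPart, h]

end StrictUpper

/-- The key algebraic identity. -/
lemma quad_alg (L D E N M : gl n)
    (hN : ∀ i j : Fin n, j ≤ i → N i j = 0) (hM : ∀ i j : Fin n, j ≤ i → M i j = 0)
    (hNs : ∀ X : gl n, Xᵀ = -X → trForm (N + (L * D - D * L)) X = 0)
    (hMs : ∀ X : gl n, Xᵀ = -X → trForm (M + (L * E - E * L)) X = 0) :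
    pb2 N N D M M E L =
      trForm (L * D) (Ra (L * E)) - trForm (D * L) (Ra (E * L))
        + trForm (L * D) (Rs (E * L)) - trForm (D * L) (Rs (L * E)) := by
  have hNP : trForm N (rPlus (E * L) - rMinus (L * E))
      = trForm (L * D - D * L) (Ra (L * E) + Rs (L * E) - (1/2 : ℝ) • (L * E)) := by
    rw [pairN hN hNs, lowPart_rp, lowT_sub]
  have hMQ : trForm M (rPlus (D * L) - rMinus (L * D))
      = trForm (L * E - E * L) (Ra (L * D) + Rs (L * D) - (1/2 : ℝ) • (L * D)) := by
    rw [pairN hM hMs, lowPart_rp, lowT_sub]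
  have hP : ∀ X Y : gl n, rPlus X - rMinus Y
      = (Ra X - Ra Y + (1/2 : ℝ) • X) + (1/2 : ℝ) • Y := by
    intro X Y
    rw [rPlus, rMinus]
    abel
  have e1 : trForm (L * E) (Ra (L * D)) = -trForm (L * D) (Ra (L * E)) := by
    rw [trForm_Ra, trForm_comm]
  have e2 : trForm (E * L) (Ra (L * D)) = -trForm (L * D) (Ra (E * L)) := by
    rw [trForm_Ra, trForm_comm]
  have e3 : trForm (L * E) (Rs (L * D)) = trForm (L * D) (Rs (L * E)) := by
    rw [trForm_Rs, trForm_comm]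
  have e4 : trForm (E * L) (Rs (L * D)) = trForm (L * D) (Rs (E * L)) := by
    rw [trForm_Rs, trForm_comm]
  have e5 : trForm (E * L) (L * D) = trForm (L * D) (E * L) := trForm_comm _ _
  have e6 : trForm (L * E) (L * D) = trForm (D * L) (E * L) := by
    unfold trForm
    rw [show (L * E) * (L * D) = (L * E * L) * D by noncomm_ring, Matrix.trace_mul_comm,
      show D * (L * E * L) = (D * L) * (E * L) by noncomm_ring]
  rw [pb2, hNP, hMQ, hP]
  simp only [trForm_add_right, trForm_sub_right, trForm_smul_right, trForm_sub_left]
  linarith [e1, e2, e3, e4, e5, e6]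

section Analytic

/-- Entry evaluation as a continuous linear map. -/
def entryCLM (i j : Fin n) : gl n →L[ℝ] ℝ :=
  LinearMap.toContinuousLinearMap
    { toFun := fun A => A i j, map_add' := fun _ _ => rfl, map_smul' := fun _ _ => rfl }

lemma exp_entry (X : gl n) (i j : Fin n) :
    NormedSpace.exp X i j = ∑' k : ℕ, (k.factorial : ℝ)⁻¹ * (X ^ k) i j := by
  have hs : Summable fun k : ℕ => ((k.factorial : ℝ)⁻¹ • X ^ k) :=
    NormedSpace.expSeries_summable' (𝕂 := ℝ) X
  have := (entryCLM i j).map_tsum hs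
  rw [NormedSpace.exp_eq_tsum ℝ]
  exact this

lemma pow_blockTriangular {X : gl n} (h : X.BlockTriangular id) (k : ℕ) :
    (X ^ k).BlockTriangular id := by
  induction k with
  | zero => simpa using Matrix.blockTriangular_one
  | succ k ih => rw [pow_succ]; exact ih.mul h

lemma exp_blockTriangular {X : gl n} (h : X.BlockTriangular id) :
    (NormedSpace.exp X).BlockTriangular id := by
  intro i j hij
  rw [exp_entry]
  have h0 : ∀ k : ℕ, (k.factorial : ℝ)⁻¹ * (X ^ k) i j = 0 := fun k => by
    rw [pow_blockTriangular h k hij]; ring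
  simp [h0]

lemma pow_diag {X : gl n} (h : X.BlockTriangular id) (k : ℕ) (i : Fin n) :
    (X ^ k) i i = (X i i) ^ k := by
  induction k with
  | zero => simp
  | succ k ih =>
    rw [pow_succ, pow_succ, ← ih, Matrix.mul_apply]
    refine Finset.sum_eq_single i ?_ (by simp)
    intro m _ hm
    rcases hm.lt_or_gt with hmi | him
    · rw [pow_blockTriangular h k (show (id m : Fin n) < id i from hmi)]; ring
    · rw [h (show (id i : Fin n) < id m from him)]; ring

lemma exp_diag {X : gl n} (h : X.BlockTriangular id) (i : Fin n) :
    NormedSpace.exp X i i = Real.exp (X i i) := by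
  rw [exp_entry]
  have h1 : ∀ k : ℕ, (k.factorial : ℝ)⁻¹ * (X ^ k) i i = (k.factorial : ℝ)⁻¹ • (X i i) ^ k :=
    fun k => by rw [pow_diag h k i]; simp
  rw [tsum_congr h1, Real.exp_eq_exp_ℝ, NormedSpace.exp_eq_tsum ℝ]

lemma exp_neg_mul_exp (X : gl n) : NormedSpace.exp (-X) * NormedSpace.exp X = 1 := by
  rw [← Matrix.exp_add_of_commute _ _ (Commute.neg_left (Commute.refl X)), neg_add_cancel,
    NormedSpace.exp_zero]

lemma hasDerivAt_exp' (X : gl n) :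
    HasDerivAt (fun t : ℝ => NormedSpace.exp (t • X)) X 0 := by
  have h := hasDerivAt_exp_smul_const (𝕂 := ℝ) X 0
  simp at h
  exact h

/-- The reduction of the derivative data of an `S`-invariant function at `(1, L)`. -/
lemma reduceF (F : gl n × gl n → ℝ) (hF : SmoothOnM F) (hFinv : SInvariant F)
    (NF NF' DF : gl n × gl n → gl n)
    (hNF : IsGrad1 F NF) (hNF' : IsGrad1' F NF') (hDF : IsGrad2 F DF)
    (df : gl n → gl n) (hdf : IsGradient (fun L : gl n => F (1, L)) df) (L : gl n) :
    NF' (1, L) = NF (1, L) ∧ DF (1, L) = df L ∧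
      (∀ i j : Fin n, j ≤ i → NF (1, L) i j = 0) ∧
      (∀ X : gl n, Xᵀ = -X → trForm (NF (1, L) + (L * DF (1, L) - DF (1, L) * L)) X = 0) := by
  have hdet : IsUnit (1 : gl n).det := by simp
  -- NF' (1,L) = NF (1,L)
  have hNN' : NF' (1, L) = NF (1, L) := by
    refine trForm_ext fun X => ?_
    have h1 := hNF 1 L hdet X
    have h2 := hNF' 1 L hdet X
    have heq : (fun t : ℝ => F (1 * NormedSpace.exp (t • X), L))
        = fun t : ℝ => F (NormedSpace.exp (t • X) * 1, L) := by
      funext t; rw [one_mul, mul_one]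
    rw [heq] at h2
    exact h2.unique h1
  -- DF (1,L) = df L
  have hDd : DF (1, L) = df L := trForm_ext fun Y => (hDF 1 L hdet Y).unique (hdf L Y)
  -- B-invariance : trForm (NF' (1,L)) X = 0 for upper triangular X
  have hupper : ∀ X : gl n, X.BlockTriangular id → trForm (NF' (1, L)) X = 0 := by
    intro X hX
    have hconst : ∀ t : ℝ, F (1 * NormedSpace.exp (t • X), L) = F (1, L) := by
      intro t
      have htri : (-(t • X) : gl n).BlockTriangular id := fun i j hij => by
        simp [hX hij]
      have hB : InB (NormedSpace.exp (-(t • X))) :=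
        ⟨exp_blockTriangular htri, fun i => by rw [exp_diag htri]; exact Real.exp_pos _⟩
      have hinv : (NormedSpace.exp (-(t • X)))⁻¹ = NormedSpace.exp (t • X) :=
        Matrix.inv_eq_right_inv (exp_neg_mul_exp _)
      have ha := hFinv 1 (NormedSpace.exp (-(t • X))) 1 L
        (by rw [IsOrth, Matrix.transpose_one, mul_one]) hB hdet
      have h1i : (1 : gl n)⁻¹ = 1 := Matrix.inv_eq_left_inv (by rw [one_mul])
      simpa [hinv, h1i] using ha
    have h0 : HasDerivAt (fun t : ℝ => F (1 * NormedSpace.exp (t • X), L)) 0 0 := by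
      rw [funext hconst]; exact hasDerivAt_const 0 _
    exact (hNF' 1 L hdet X).unique h0
  -- strict upper triangularity of NF (1,L)
  have hNup : ∀ i j : Fin n, j ≤ i → NF (1, L) i j = 0 := by
    intro i j hji
    have hX : (Matrix.single j i (1 : ℝ)).BlockTriangular id := by
      intro p q hqp
      by_cases hc : j = p ∧ i = q
      · exfalso; obtain ⟨rfl, rfl⟩ := hc; exact absurd hqp (not_lt.2 hji)
      · simp [Matrix.single, hc]
    have h := hupper _ hX
    rw [hNN', trForm_stdBasis] at h
    exact h
  -- fderiv analysis
  have hopen : IsOpen {p : gl n × gl n | IsUnit p.1.det} := by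
    have hc : Continuous fun p : gl n × gl n => p.1.det := continuous_fst.matrix_det
    have hset : {p : gl n × gl n | IsUnit p.1.det}
        = (fun p : gl n × gl n => p.1.det) ⁻¹' {x | x ≠ 0} := by
      ext p; simp [isUnit_iff_ne_zero]
    rw [hset]
    exact (isOpen_ne_fun hc continuous_const)
  have hmem : ((1 : gl n), L) ∈ {p : gl n × gl n | IsUnit p.1.det} := by simp
  have hdiffat : DifferentiableAt ℝ F (1, L) :=
    (hF.differentiableOn (by simp)).differentiableAt (hopen.mem_nhds hmem)
  set φ := fderiv ℝ F (1, L) with hφdef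
  have hfd : HasFDerivAt F φ (1, L) := hdiffat.hasFDerivAt
  have hφ1 : ∀ Z : gl n, φ (Z, 0) = trForm (NF (1, L)) Z := by
    intro Z
    have hcur : HasDerivAt (fun t : ℝ => (NormedSpace.exp (t • Z) * 1, L))
        ((Z * 1, 0) : gl n × gl n) 0 :=
      ((hasDerivAt_exp' Z).mul_const 1).prodMk (hasDerivAt_const 0 L)
    have h00 : ((1 : gl n), L)
        = ((fun t : ℝ => (NormedSpace.exp (t • Z) * 1, L)) 0) := by
      simp [NormedSpace.exp_zero]
    have hcomp : HasDerivAt (fun t : ℝ => F (NormedSpace.exp (t • Z) * 1, L))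
        (φ (Z * 1, 0)) 0 := (h00 ▸ hfd).comp_hasDerivAt 0 hcur
    calc φ (Z, 0) = φ (Z * 1, 0) := by rw [mul_one]
      _ = trForm (NF (1, L)) Z := ((hNF 1 L hdet Z).unique hcomp).symm
  have hφ2 : ∀ Y : gl n, φ (0, Y) = trForm (DF (1, L)) Y := by
    intro Y
    have hcv : HasDerivAt (fun t : ℝ => L + t • Y) Y 0 := by
      have h := ((hasDerivAt_id (0 : ℝ)).smul_const Y).const_add L
      simp only [id, one_smul] at h
      exact h
    have hcur : HasDerivAt (fun t : ℝ => ((1 : gl n), L + t • Y))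
        ((0, Y) : gl n × gl n) 0 := (hasDerivAt_const 0 _).prodMk hcv
    have h00 : ((1 : gl n), L) = ((fun t : ℝ => ((1 : gl n), L + t • Y)) 0) := by simp
    have hcomp : HasDerivAt (fun t : ℝ => F (1, L + t • Y)) (φ (0, Y)) 0 :=
      (h00 ▸ hfd).comp_hasDerivAt 0 hcur
    exact ((hDF 1 L hdet Y).unique hcomp).symm
  -- the orthogonal-invariance constraint
  have hNs : ∀ X : gl n, Xᵀ = -X →
      trForm (NF (1, L) + (L * DF (1, L) - DF (1, L) * L)) X = 0 := by
    intro X hXskew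
    have hexpT : HasDerivAt (fun t : ℝ => (NormedSpace.exp (t • X))ᵀ) Xᵀ 0 := by
      have hfun : (fun t : ℝ => (NormedSpace.exp (t • X))ᵀ)
          = fun t : ℝ => NormedSpace.exp (t • Xᵀ) := by
        funext t; rw [← Matrix.exp_transpose, Matrix.transpose_smul]
      rw [hfun]; exact hasDerivAt_exp' Xᵀ
    have hcur2 : HasDerivAt
        (fun t : ℝ => NormedSpace.exp (t • X) * L * (NormedSpace.exp (t • X))ᵀ)
        (X * L + L * Xᵀ) 0 := by
      have := ((hasDerivAt_exp' X).mul_const L).mul hexpT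
      simp [NormedSpace.exp_zero] at this
      exact this
    have hcur : HasDerivAt
        (fun t : ℝ => (NormedSpace.exp (t • X),
          NormedSpace.exp (t • X) * L * (NormedSpace.exp (t • X))ᵀ))
        ((X, X * L + L * Xᵀ) : gl n × gl n) 0 := (hasDerivAt_exp' X).prodMk hcur2
    have hconst : (fun t : ℝ => F (NormedSpace.exp (t • X),
        NormedSpace.exp (t • X) * L * (NormedSpace.exp (t • X))ᵀ))
        = fun _ : ℝ => F (1, L) := by
      funext t
      have htr : (NormedSpace.exp (t • X))ᵀ = NormedSpace.exp (-(t • X)) := by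
        rw [← Matrix.exp_transpose, Matrix.transpose_smul, hXskew, smul_neg]
      have horth : IsOrth (NormedSpace.exp (t • X)) := by
        rw [IsOrth, htr]; exact exp_neg_mul_exp _
      have ha := hFinv (NormedSpace.exp (t • X)) 1 1 L horth
        ⟨Matrix.blockTriangular_one, fun i => by simp [Matrix.one_apply_eq]⟩ hdet
      have hainv : (NormedSpace.exp (t • X))⁻¹ = (NormedSpace.exp (t • X))ᵀ :=
        Matrix.inv_eq_left_inv horth
      have h1i : (1 : gl n)⁻¹ = 1 := Matrix.inv_eq_left_inv (by rw [one_mul])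
      simpa [hainv, h1i] using ha
    have hzero : HasDerivAt (fun t : ℝ => F (NormedSpace.exp (t • X),
        NormedSpace.exp (t • X) * L * (NormedSpace.exp (t • X))ᵀ)) 0 0 := by
      rw [hconst]; exact hasDerivAt_const 0 _
    have h00 : ((1 : gl n), L) = ((fun t : ℝ => (NormedSpace.exp (t • X),
        NormedSpace.exp (t • X) * L * (NormedSpace.exp (t • X))ᵀ)) 0) := by
      simp [NormedSpace.exp_zero]
    have hcomp := (h00 ▸ hfd).comp_hasDerivAt 0 hcur
    have hval : φ (X, X * L + L * Xᵀ) = 0 := hcomp.unique hzero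
    have hsplit : φ (X, X * L + L * Xᵀ) = φ (X, 0) + φ (0, X * L + L * Xᵀ) := by
      rw [← map_add]
      congr 1
      simp
    have harg : X * L + L * Xᵀ = X * L - L * X := by
      rw [hXskew, Matrix.mul_neg, ← sub_eq_add_neg]
    have c1 : trForm (DF (1, L)) (X * L) = trForm (L * DF (1, L)) X := by
      unfold trForm
      rw [show DF (1, L) * (X * L) = (DF (1, L) * X) * L by noncomm_ring,
        Matrix.trace_mul_comm, ← mul_assoc]
    have c2 : trForm (DF (1, L)) (L * X) = trForm (DF (1, L) * L) X := by
      unfold trForm; rw [← mul_assoc]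
    have hD : trForm (DF (1, L)) (X * L + L * Xᵀ)
        = trForm (L * DF (1, L) - DF (1, L) * L) X := by
      rw [harg, trForm_sub_right, trForm_sub_left, c1, c2]
    rw [trForm_add_left]
    have e1 := hφ1 X
    have e2 := hφ2 (X * L + L * Xᵀ)
    rw [hD] at e2
    linarith [hval, hsplit, e1, e2]
  exact ⟨hNN', hDd, hNup, hNs⟩

end Analytic

/-- Theorem 3, quadratic part: for `S`-invariant `F, H` and the
functions `f(L) = F(1ₙ,L)`, `h(L) = H(1ₙ,L)`, the quadratic bracket on `T*GL(n,ℝ)`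
reduces to the quadratic r-matrix bracket: `{F,H}₂(1ₙ, L) = {f,h}₂(L)`. -/
theorem stmt18 (n : ℕ) (F H : gl n × gl n → ℝ)
    (hF : SmoothOnM F) (hH : SmoothOnM H)
    (hFinv : SInvariant F) (hHinv : SInvariant H)
    (NF NF' DF NH NH' DH : gl n × gl n → gl n)
    (hNF : IsGrad1 F NF) (hNF' : IsGrad1' F NF') (hDF : IsGrad2 F DF)
    (hNH : IsGrad1 H NH) (hNH' : IsGrad1' H NH') (hDH : IsGrad2 H DH)
    (df dh : gl n → gl n)
    (hdf : IsGradient (fun L : gl n => F (1, L)) df)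
    (hdh : IsGradient (fun L : gl n => H (1, L)) dh)
    (L : gl n) :
    pb2 (NF (1, L)) (NF' (1, L)) (DF (1, L)) (NH (1, L)) (NH' (1, L)) (DH (1, L)) L =
      quadBr df dh L := by
  obtain ⟨hNeq, hDeq, hNup, hNs⟩ := reduceF F hF hFinv NF NF' DF hNF hNF' hDF df hdf L
  obtain ⟨hMeq, hEeq, hMup, hMs⟩ := reduceF H hH hHinv NH NH' DH hNH hNH' hDH dh hdh L
  rw [hNeq, hMeq, hDeq, hEeq]
  rw [hDeq] at hNs
  rw [hEeq] at hMs
  rw [quadBr]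
  exact quad_alg L (df L) (dh L) (NF (1, L)) (NH (1, L)) hNup hMup hNs hMs
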